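/- For any interpretation I and any completable set Γ of sentences such that the graph G^sp_I(Γ) has no infinite walks, I is a supported model of Γ if and only if I is a stable model of Γ. -/
import Mathlib


/-! Framework: first-order formulas over a signature with predicate symbols `P`
(partitioned into intensional and extensional ones by `ints : P → Bool`) and a
fixed domain `D`.  Sentences over the extended signature σ^I are represented with
quantifiers as functions on the domain (names of domain elements are the elements
themselves), so ground atoms are pairs `(p, ds)`. -/

inductive Fml (P D : Type) : Type where
  | atom : P → List D → Fml P D
  | eq : D → D → Fml P D
  | bot : Fml P D
  | and : Fml P D → Fml P D → Fml P D
  | or : Fml P D → Fml P D → Fml P D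
  | imp : Fml P D → Fml P D → Fml P D
  | all : (D → Fml P D) → Fml P D
  | ex : (D → Fml P D) → Fml P D

abbrev GrAtom (P D : Type) := P × List D
abbrev Interp (P D : Type) := P → List D → Prop

namespace Fml
variable {P D : Type}

/-- Classical satisfaction. -/
def sat (I : Interp P D) : Fml P D → Prop
  | atom p ds => I p ds
  | eq a b => a = b
  | bot => False
  | and F G => F.sat I ∧ G.sat I
  | or F G => F.sat I ∨ G.sat I
  | imp F G => F.sat I → G.sat I
  | all f => ∀ d, (f d).sat I
  | ex f => ∃ d, (f d).sat I

/-- `I↓`: the intensional ground atoms satisfied by `I`. -/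
def idown (ints : P → Bool) (I : Interp P D) : Set (GrAtom P D) :=
  {a | ints a.1 = true ∧ I a.1 a.2}

/-- Here-and-there satisfaction for an HT-interpretation `⟨H, I⟩`. -/
def htSat (ints : P → Bool) (H : Set (GrAtom P D)) (I : Interp P D) : Fml P D → Prop
  | atom p ds => if ints p then (p, ds) ∈ H else I p ds
  | eq a b => a = b
  | bot => False
  | and F G => F.htSat ints H I ∧ G.htSat ints H I
  | or F G => F.htSat ints H I ∨ G.htSat ints H I
  | imp F G => (F.htSat ints H I → G.htSat ints H I) ∧ (F.sat I → G.sat I)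
  | all f => ∀ d, (f d).htSat ints H I
  | ex f => ∃ d, (f d).htSat ints H I

/-- `F` contains an intensional predicate symbol. -/
def hasIntens (ints : P → Bool) : Fml P D → Prop
  | atom p _ => ints p = true
  | eq _ _ => False
  | bot => False
  | and F G => F.hasIntens ints ∨ G.hasIntens ints
  | or F G => F.hasIntens ints ∨ G.hasIntens ints
  | imp F G => F.hasIntens ints ∨ G.hasIntens ints
  | all f => ∃ d, (f d).hasIntens ints
  | ex f => ∃ d, (f d).hasIntens ints

/-- The predicate symbol `q` occurs in `F`. -/
def hasPred (q : P) : Fml P D → Prop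
  | atom p _ => p = q
  | eq _ _ => False
  | bot => False
  | and F G => F.hasPred q ∨ G.hasPred q
  | or F G => F.hasPred q ∨ G.hasPred q
  | imp F G => F.hasPred q ∨ G.hasPred q
  | all f => ∃ d, (f d).hasPred q
  | ex f => ∃ d, (f d).hasPred q

open scoped Classical in
/-- The set `Pos_I(F)` of strictly positive atoms of `F` with respect to `I`. -/
noncomputable def pos (ints : P → Bool) (I : Interp P D) : Fml P D → Set (GrAtom P D)
  | atom p ds => if ints p = true ∧ I p ds then {(p, ds)} else ∅
  | eq _ _ => ∅
  | bot => ∅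
  | and F G =>
      if (Fml.and F G).hasIntens ints ∧ (Fml.and F G).sat I then
        F.pos ints I ∪ G.pos ints I else ∅
  | or F G =>
      if (Fml.or F G).hasIntens ints ∧ (Fml.or F G).sat I then
        F.pos ints I ∪ G.pos ints I else ∅
  | imp F G =>
      if (Fml.imp F G).hasIntens ints ∧ (Fml.imp F G).sat I then G.pos ints I else ∅
  | all f =>
      if (Fml.all f).hasIntens ints ∧ (Fml.all f).sat I then ⋃ d, (f d).pos ints I else ∅
  | ex f =>
      if (Fml.ex f).hasIntens ints ∧ (Fml.ex f).sat I then ⋃ d, (f d).pos ints I else ∅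

/-- `ruleSub S R`: `R` is obtained from a rule subformula of `S` (an occurrence of an
implication not in the antecedent of any implication) by substituting domain elements
for the free variables. -/
inductive ruleSub : Fml P D → Fml P D → Prop
  | self (F G : Fml P D) : ruleSub (Fml.imp F G) (Fml.imp F G)
  | andL {F G R : Fml P D} : ruleSub F R → ruleSub (Fml.and F G) R
  | andR {F G R : Fml P D} : ruleSub G R → ruleSub (Fml.and F G) R
  | orL {F G R : Fml P D} : ruleSub F R → ruleSub (Fml.or F G) R
  | orR {F G R : Fml P D} : ruleSub G R → ruleSub (Fml.or F G) R
  | impR {F G R : Fml P D} : ruleSub G R → ruleSub (Fml.imp F G) R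
  | all {f : D → Fml P D} {R : Fml P D} (d : D) : ruleSub (f d) R → ruleSub (Fml.all f) R
  | ex {f : D → Fml P D} {R : Fml P D} (d : D) : ruleSub (f d) R → ruleSub (Fml.ex f) R

end Fml

variable {P D : Type}

/-- Edge relation of the positive dependency graph `G^sp_I(Γ)`. -/
def depEdge (ints : P → Bool) (I : Interp P D) (Γ : Set (Fml P D))
    (A B : GrAtom P D) : Prop :=
  ∃ S ∈ Γ, ∃ F G : Fml P D, S.ruleSub (Fml.imp F G) ∧
    A ∈ G.pos ints I ∧ B ∈ F.pos ints I

/-- A graph (given by its edge relation) has no infinite walks. -/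
def NoInfWalks {V : Type} (E : V → V → Prop) : Prop :=
  ¬ ∃ w : ℕ → V, ∀ n, E (w n) (w (n + 1))

def SatSet (I : Interp P D) (Γ : Set (Fml P D)) : Prop := ∀ F ∈ Γ, F.sat I

def HtSatSet (ints : P → Bool) (H : Set (GrAtom P D)) (I : Interp P D)
    (Γ : Set (Fml P D)) : Prop := ∀ F ∈ Γ, F.htSat ints H I

/-- `I` is a stable model of `Γ`. -/
def StableModel (ints : P → Bool) (I : Interp P D) (Γ : Set (Fml P D)) : Prop :=
  SatSet I Γ ∧ ∀ H : Set (GrAtom P D), H ⊂ Fml.idown ints I → ¬ HtSatSet ints H I Γ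

/-- `I` is a pointwise stable model of `Γ`. -/
def PointwiseStable (ints : P → Bool) (I : Interp P D) (Γ : Set (Fml P D)) : Prop :=
  SatSet I Γ ∧ ∀ M ∈ Fml.idown ints I,
    ¬ HtSatSet ints (Fml.idown ints I \ {M}) I Γ

/-! ### Completable sets -/

/-- A member of the definition of the intensional symbol `p`: the completable
sentence `∀̃ (F(U, V) → p(V))` with `m` extra variables `U` and `k` head variables `V`. -/
structure CRule (P D : Type) where
  p : P
  k : ℕ
  m : ℕ
  F : (Fin m → D) → (Fin k → D) → Fml P D

/-- A first-order constraint `∀̃ (F → G)` (with `G` containing no intensional symbols). -/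
structure CConstr (P D : Type) where
  n : ℕ
  F : (Fin n → D) → Fml P D
  G : (Fin n → D) → Fml P D

/-- A completable set of sentences: definitions plus constraints. -/
structure CSet (P D : Type) where
  rules : List (CRule P D)
  constrs : List (CConstr P D)

/-- The conditions making a `CSet` a completable set: head symbols are intensional,
consequents of definitions of the same symbol are identical, and consequents of
constraints contain no intensional symbols. -/
def CSet.Completable (ints : P → Bool) (Γ : CSet P D) : Prop :=
  (∀ r ∈ Γ.rules, ints r.p = true) ∧
  (∀ r ∈ Γ.rules, ∀ r' ∈ Γ.rules, r.p = r'.p → r.k = r'.k) ∧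
  (∀ c ∈ Γ.constrs, ∀ a, ¬ (c.G a).hasIntens ints)

/-- `n`-fold universal quantification. -/
def allN : (n : ℕ) → ((Fin n → D) → Fml P D) → Fml P D
  | 0, F => F (fun i => i.elim0)
  | n + 1, F => Fml.all fun d => allN n fun a => F (Fin.cons d a)

def CRule.sent (r : CRule P D) : Fml P D :=
  allN r.m fun u => allN r.k fun v =>
    Fml.imp (r.F u v) (Fml.atom r.p (List.ofFn v))

def CConstr.sent (c : CConstr P D) : Fml P D :=
  allN c.n fun a => Fml.imp (c.F a) (c.G a)

/-- The set of sentences of a completable set. -/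
def CSet.sents (Γ : CSet P D) : Set (Fml P D) :=
  {S | ∃ r ∈ Γ.rules, S = r.sent} ∪ {S | ∃ c ∈ Γ.constrs, S = c.sent}

/-- `I` is a supported model of `Γ`: every true intensional ground atom `p(d)` is the
consequent of an instance `F → p(d)` of a member of `Γ` whose antecedent is satisfied. -/
def CSet.Supported (ints : P → Bool) (I : Interp P D) (Γ : CSet P D) : Prop :=
  SatSet I Γ.sents ∧
  ∀ p (ds : List D), ints p = true → I p ds →
    ∃ r ∈ Γ.rules, r.p = p ∧
      ∃ (v : Fin r.k → D) (u : Fin r.m → D), List.ofFn v = ds ∧ (r.F u v).sat I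

/-- `I` satisfies the completion `COMP[Γ]` of the completable set `Γ`:
the completed definitions of all intensional symbols plus the constraints. -/
def CSet.SatComp (ints : P → Bool) (I : Interp P D) (Γ : CSet P D) : Prop :=
  (∀ p, ints p = true → ∀ ds : List D,
    (I p ds ↔ ∃ r ∈ Γ.rules, r.p = p ∧
      ∃ (v : Fin r.k → D) (u : Fin r.m → D), List.ofFn v = ds ∧ (r.F u v).sat I)) ∧
  (∀ c ∈ Γ.constrs, ∀ a, (c.F a).sat I → (c.G a).sat I)

/-- Edge relation of `G^sp_I(Γ)` for a completable set `Γ`, via instances `F → G`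
of its members. -/
def CSet.edge (ints : P → Bool) (I : Interp P D) (Γ : CSet P D)
    (A B : GrAtom P D) : Prop :=
  ∃ F G : Fml P D,
    ((∃ r ∈ Γ.rules, ∃ (u : Fin r.m → D) (v : Fin r.k → D),
        F = r.F u v ∧ G = Fml.atom r.p (List.ofFn v)) ∨
     (∃ c ∈ Γ.constrs, ∃ a : Fin c.n → D, F = c.F a ∧ G = c.G a)) ∧
    A ∈ G.pos ints I ∧ B ∈ F.pos ints I

/-- `I` is a stable model of the completable set `Γ`. -/
def CSet.Stable (ints : P → Bool) (I : Interp P D) (Γ : CSet P D) : Prop :=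
  StableModel ints I Γ.sents

/-- `I` is a pointwise stable model of the completable set `Γ`. -/
def CSet.PointwiseStable (ints : P → Bool) (I : Interp P D) (Γ : CSet P D) : Prop :=
  _root_.PointwiseStable ints I Γ.sents

section Aux
variable {P D : Type} {ints : P → Bool} {I : Interp P D} {H : Set (GrAtom P D)}

lemma htSat_imp_sat (hH : H ⊆ Fml.idown ints I) :
    ∀ F : Fml P D, F.htSat ints H I → F.sat I := by
  intro F
  induction F with
  | atom p ds =>
      intro h
      simp only [Fml.htSat] at h
      split at h
      · exact (hH h).2
      · exact h
  | eq a b => exact id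
  | bot => exact id
  | and F G ihF ihG => exact fun h => ⟨ihF h.1, ihG h.2⟩
  | or F G ihF ihG =>
      exact fun h => h.elim (fun h => Or.inl (ihF h)) (fun h => Or.inr (ihG h))
  | imp F G ihF ihG => exact fun h => h.2
  | all f ih => exact fun h d => ih d (h d)
  | ex f ih => exact fun h => h.elim (fun d hd => ⟨d, ih d hd⟩)

lemma htSat_iff_sat_of_not_hasIntens :
    ∀ F : Fml P D, ¬ F.hasIntens ints → (F.htSat ints H I ↔ F.sat I) := by
  intro F
  induction F with
  | atom p ds =>
      intro h
      simp only [Fml.hasIntens] at h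
      simp only [Fml.htSat, Fml.sat, if_neg h]
  | eq a b => exact fun _ => Iff.rfl
  | bot => exact fun _ => Iff.rfl
  | and F G ihF ihG =>
      intro h
      simp only [Fml.hasIntens, not_or] at h
      simp only [Fml.htSat, Fml.sat, ihF h.1, ihG h.2]
  | or F G ihF ihG =>
      intro h
      simp only [Fml.hasIntens, not_or] at h
      simp only [Fml.htSat, Fml.sat, ihF h.1, ihG h.2]
  | imp F G ihF ihG =>
      intro h
      simp only [Fml.hasIntens, not_or] at h
      simp only [Fml.htSat, Fml.sat, ihF h.1, ihG h.2, and_self]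
  | all f ih =>
      intro h
      simp only [Fml.hasIntens, not_exists] at h
      simp only [Fml.htSat, Fml.sat]
      exact forall_congr' fun d => ih d (h d)
  | ex f ih =>
      intro h
      simp only [Fml.hasIntens, not_exists] at h
      simp only [Fml.htSat, Fml.sat]
      exact exists_congr fun d => ih d (h d)

lemma hasIntens_of_not_htSat {F : Fml P D} (hs : F.sat I)
    (hn : ¬ F.htSat ints H I) : F.hasIntens ints := by
  by_contra h
  exact hn ((htSat_iff_sat_of_not_hasIntens F h).mpr hs)

lemma exists_pos_mem (hH : H ⊆ Fml.idown ints I) :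
    ∀ F : Fml P D, F.sat I → ¬ F.htSat ints H I →
      ∃ B ∈ F.pos ints I, B ∈ Fml.idown ints I \ H := by
  intro F
  induction F with
  | atom p ds =>
      intro hs hn
      simp only [Fml.sat] at hs
      simp only [Fml.htSat] at hn
      by_cases hp : ints p = true
      · rw [if_pos hp] at hn
        refine ⟨(p, ds), ?_, ⟨hp, hs⟩, hn⟩
        simp only [Fml.pos, if_pos (⟨hp, hs⟩ : _ ∧ _)]
        rfl
      · rw [if_neg hp] at hn; exact absurd hs hn
  | eq a b => exact fun hs hn => absurd hs hn
  | bot => exact fun hs _ => absurd hs id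
  | and F G ihF ihG =>
      intro hs hn
      have hint := hasIntens_of_not_htSat hs hn
      simp only [Fml.htSat, not_and_or] at hn
      have hpos : (Fml.and F G).pos ints I = F.pos ints I ∪ G.pos ints I := by
        simp only [Fml.pos, if_pos (⟨hint, hs⟩ : _ ∧ _)]
      rw [hpos]
      rcases hn with hn | hn
      · obtain ⟨B, hB1, hB2⟩ := ihF hs.1 hn
        exact ⟨B, Or.inl hB1, hB2⟩
      · obtain ⟨B, hB1, hB2⟩ := ihG hs.2 hn
        exact ⟨B, Or.inr hB1, hB2⟩
  | or F G ihF ihG =>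
      intro hs hn
      have hint := hasIntens_of_not_htSat hs hn
      simp only [Fml.htSat, not_or] at hn
      have hpos : (Fml.or F G).pos ints I = F.pos ints I ∪ G.pos ints I := by
        simp only [Fml.pos, if_pos (⟨hint, hs⟩ : _ ∧ _)]
      rw [hpos]
      rcases hs with hs | hs
      · obtain ⟨B, hB1, hB2⟩ := ihF hs hn.1
        exact ⟨B, Or.inl hB1, hB2⟩
      · obtain ⟨B, hB1, hB2⟩ := ihG hs hn.2
        exact ⟨B, Or.inr hB1, hB2⟩
  | imp F G ihF ihG =>
      intro hs hn
      have hint := hasIntens_of_not_htSat hs hn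
      simp only [Fml.htSat, not_and_or] at hn
      rcases hn with hn | hn
      · rw [Classical.not_imp] at hn
        have hsG : G.sat I := hs (htSat_imp_sat hH F hn.1)
        obtain ⟨B, hB1, hB2⟩ := ihG hsG hn.2
        refine ⟨B, ?_, hB2⟩
        simp only [Fml.pos, if_pos (⟨hint, hs⟩ : _ ∧ _)]
        exact hB1
      · exact absurd hs hn
  | all f ih =>
      intro hs hn
      have hint := hasIntens_of_not_htSat hs hn
      simp only [Fml.htSat, not_forall] at hn
      obtain ⟨d, hd⟩ := hn
      obtain ⟨B, hB1, hB2⟩ := ih d (hs d) hd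
      refine ⟨B, ?_, hB2⟩
      simp only [Fml.pos,
        if_pos (⟨hint, hs⟩ : (Fml.all f).hasIntens ints ∧ (Fml.all f).sat I)]
      exact Set.mem_iUnion_of_mem d hB1
  | ex f ih =>
      intro hs hn
      have hint := hasIntens_of_not_htSat hs hn
      simp only [Fml.htSat, not_exists] at hn
      obtain ⟨d, hd⟩ := hs
      obtain ⟨B, hB1, hB2⟩ := ih d hd (hn d)
      refine ⟨B, ?_, hB2⟩
      simp only [Fml.pos,
        if_pos (⟨hint, ⟨d, hd⟩⟩ : (Fml.ex f).hasIntens ints ∧ (Fml.ex f).sat I)]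
      exact Set.mem_iUnion_of_mem d hB1

lemma sat_allN : ∀ (n : ℕ) (F : (Fin n → D) → Fml P D),
    (allN n F).sat I ↔ ∀ a, (F a).sat I := by
  intro n
  induction n with
  | zero =>
      intro F
      simp only [allN]
      constructor
      · intro h a
        have : a = fun i => i.elim0 := funext fun i => i.elim0
        rw [this]; exact h
      · exact fun h => h _
  | succ n ih =>
      intro F
      simp only [allN, Fml.sat]
      constructor
      · intro h a
        have := (ih _).mp (h (a 0))
        have h2 := this (Fin.tail a)
        rwa [Fin.cons_self_tail] at h2
      · intro h d
        exact (ih _).mpr fun a => h _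

lemma htSat_allN : ∀ (n : ℕ) (F : (Fin n → D) → Fml P D),
    (allN n F).htSat ints H I ↔ ∀ a, (F a).htSat ints H I := by
  intro n
  induction n with
  | zero =>
      intro F
      simp only [allN]
      constructor
      · intro h a
        have : a = fun i => i.elim0 := funext fun i => i.elim0
        rw [this]; exact h
      · exact fun h => h _
  | succ n ih =>
      intro F
      simp only [allN, Fml.htSat]
      constructor
      · intro h a
        have := (ih _).mp (h (a 0))
        have h2 := this (Fin.tail a)
        rwa [Fin.cons_self_tail] at h2
      · intro h d
        exact (ih _).mpr fun a => h _

end Aux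
/-- Lemma 4: if `G^sp_I(Γ)` has no infinite walks, then `I` is a supported model of the
completable set `Γ` iff `I` is a stable model of `Γ`. -/
theorem supported_iff_stable {P D : Type} (ints : P → Bool) (I : Interp P D)
    (Γ : CSet P D) (hΓ : Γ.Completable ints)
    (hwalk : NoInfWalks (Γ.edge ints I)) :
    Γ.Supported ints I ↔ Γ.Stable ints I := by
  constructor
  · rintro ⟨hsat, hsup⟩
    refine ⟨hsat, ?_⟩
    intro H hss hht
    have hH : H ⊆ Fml.idown ints I := hss.1
    have step : ∀ A ∈ Fml.idown ints I \ H,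
        ∃ B ∈ Fml.idown ints I \ H, Γ.edge ints I A B := by
      rintro ⟨p, ds⟩ ⟨⟨hp, hI⟩, hnH⟩
      obtain ⟨r, hr, hrp, v, u, hv, hFsat⟩ := hsup p ds hp hI
      have hrsent := hht r.sent (Or.inl ⟨r, hr, rfl⟩)
      rw [CRule.sent, htSat_allN] at hrsent
      have h2 := (htSat_allN _ _).mp (hrsent u) v
      have hnatom : ¬ (Fml.atom r.p (List.ofFn v)).htSat ints H I := by
        simp only [Fml.htSat, if_pos (hΓ.1 r hr)]
        rw [hrp, hv]
        exact hnH
      have hnF : ¬ (r.F u v).htSat ints H I := fun h => hnatom (h2.1 h)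
      obtain ⟨B, hB1, hB2⟩ := exists_pos_mem hH _ hFsat hnF
      refine ⟨B, hB2, r.F u v, Fml.atom r.p (List.ofFn v),
        Or.inl ⟨r, hr, u, v, rfl, rfl⟩, ?_, hB1⟩
      have hIr : I r.p (List.ofFn v) := by rw [hrp, hv]; exact hI
      simp only [Fml.pos, if_pos (⟨hΓ.1 r hr, hIr⟩ : _ ∧ _)]
      have heq : ((p, ds) : GrAtom P D) = (r.p, List.ofFn v) := by rw [hrp, hv]
      rw [heq]
      rfl
    obtain ⟨A0, hA01, hA02⟩ := Set.exists_of_ssubset hss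
    have key : ∀ A : {A : GrAtom P D // A ∈ Fml.idown ints I \ H},
        ∃ B : {A : GrAtom P D // A ∈ Fml.idown ints I \ H}, Γ.edge ints I A.1 B.1 := by
      rintro ⟨A, hA⟩
      obtain ⟨B, hB, he⟩ := step A hA
      exact ⟨⟨B, hB⟩, he⟩
    let w : ℕ → {A : GrAtom P D // A ∈ Fml.idown ints I \ H} :=
      fun n => Nat.rec ⟨A0, ⟨hA01, hA02⟩⟩ (fun _ B => Classical.choose (key B)) n
    exact hwalk ⟨fun n => (w n).1, fun n => Classical.choose_spec (key (w n))⟩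
  · rintro ⟨hsat, hstab⟩
    refine ⟨hsat, ?_⟩
    intro p ds hp hI
    by_contra hns
    set H := Fml.idown ints I \ {((p, ds) : GrAtom P D)} with hHdef
    have hH : H ⊆ Fml.idown ints I := Set.diff_subset
    have hmem : ((p, ds) : GrAtom P D) ∈ Fml.idown ints I := ⟨hp, hI⟩
    have hss : H ⊂ Fml.idown ints I := by
      refine ⟨hH, fun hsub => ?_⟩
      exact (hsub hmem).2 rfl
    refine hstab H hss ?_
    rintro S (⟨r, hr, rfl⟩ | ⟨c, hc, rfl⟩)
    · rw [CRule.sent, htSat_allN]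
      intro u
      rw [htSat_allN]
      intro v
      have hs : (Fml.imp (r.F u v) (Fml.atom r.p (List.ofFn v))).sat I := by
        have h := hsat r.sent (Or.inl ⟨r, hr, rfl⟩)
        rw [CRule.sent, sat_allN] at h
        exact (sat_allN _ _).mp (h u) v
      refine ⟨?_, hs⟩
      intro hF
      have hsF := htSat_imp_sat hH _ hF
      have hIp : I r.p (List.ofFn v) := hs hsF
      simp only [Fml.htSat, if_pos (hΓ.1 r hr)]
      refine ⟨⟨hΓ.1 r hr, hIp⟩, ?_⟩
      intro heq
      have heq' : ((r.p, List.ofFn v) : GrAtom P D) = (p, ds) := heq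
      exact hns ⟨r, hr, congrArg Prod.fst heq', v, u, congrArg Prod.snd heq', hsF⟩
    · rw [CConstr.sent, htSat_allN]
      intro a
      have hs : (Fml.imp (c.F a) (c.G a)).sat I := by
        have h := hsat c.sent (Or.inr ⟨c, hc, rfl⟩)
        rw [CConstr.sent, sat_allN] at h
        exact h a
      refine ⟨?_, hs⟩
      intro hF
      exact (htSat_iff_sat_of_not_hasIntens _ (hΓ.2.2 c hc a)).mpr
        (hs (htSat_imp_sat hH _ hF))
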